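/- arXiv:math-ph/0408054 — 5 statements merged into one kernel-verified Lean document; each statement's English description precedes it below -/
import Mathlib

section
/- For t > 0 and κ > 0, the solution of the half-line wave problem with Robin boundary condition applied to initial data f (extended by 0 to negative arguments) given by u(t,x) = ½[f(x-t) + f(x+t) + f(t-x)] - κ·θ(t-x)·∫_0^{t-x} e^{-κ(t-x-y)} f(y) dy satisfies the wave equation ∂²u/∂t² = ∂²u/∂x² in the region where t - x ≠ 0 and all arguments of f avoid nonsmooth points, assuming f is C². -/
/-!
With `G a = κ e^{-κa} ∫₀^a e^{κy} f y dy` the Robin term is `G (t - x)`, and `G' = κ (f - G)`, so `G`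
is `C²` as soon as `f` is `C¹`. Hence `u(t,x) = A(x-t) + B(x+t) + C(t-x)` with the `C²` profiles
`A = B = f/2` and `C = f/2 - G`, and every such d'Alembert sum solves `u_tt = u_xx`.
-/

open Real

section dAlembert

variable {A B C : ℝ → ℝ}

lemma deriv_deriv_dAlembert_time (hA : ContDiff ℝ 2 A) (hB : ContDiff ℝ 2 B)
    (hC : ContDiff ℝ 2 C) (t x : ℝ) :
    deriv (fun s => deriv (fun s' => A (x - s') + B (x + s') + C (s' - x)) s) t =
      deriv (deriv A) (x - t) + deriv (deriv B) (x + t) + deriv (deriv C) (t - x) := by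
  have hA₁ := hA.differentiable two_ne_zero
  have hB₁ := hB.differentiable two_ne_zero
  have hC₁ := hC.differentiable two_ne_zero
  have hA₂ := hA.differentiable_deriv_two
  have hB₂ := hB.differentiable_deriv_two
  have hC₂ := hC.differentiable_deriv_two
  have h : ∀ s, deriv (fun s' => A (x - s') + B (x + s') + C (s' - x)) s =
      -deriv A (x - s) + deriv B (x + s) + deriv C (s - x) := fun s => by
    rw [deriv_fun_add (by fun_prop) (by fun_prop), deriv_fun_add (by fun_prop) (by fun_prop),
      deriv_comp_const_sub, deriv_comp_const_add, deriv_comp_sub_const]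
  simp only [h]
  rw [deriv_fun_add (by fun_prop) (by fun_prop), deriv_fun_add (by fun_prop) (by fun_prop),
      deriv.fun_neg, deriv_comp_const_sub, deriv_comp_const_add, deriv_comp_sub_const, neg_neg]

lemma deriv_deriv_dAlembert_space (hA : ContDiff ℝ 2 A) (hB : ContDiff ℝ 2 B)
    (hC : ContDiff ℝ 2 C) (t x : ℝ) :
    deriv (fun z => deriv (fun z' => A (z' - t) + B (z' + t) + C (t - z')) z) x =
      deriv (deriv A) (x - t) + deriv (deriv B) (x + t) + deriv (deriv C) (t - x) := by
  have hA₁ := hA.differentiable two_ne_zero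
  have hB₁ := hB.differentiable two_ne_zero
  have hC₁ := hC.differentiable two_ne_zero
  have hA₂ := hA.differentiable_deriv_two
  have hB₂ := hB.differentiable_deriv_two
  have hC₂ := hC.differentiable_deriv_two
  have h : ∀ z, deriv (fun z' => A (z' - t) + B (z' + t) + C (t - z')) z =
      deriv A (z - t) + deriv B (z + t) + -deriv C (t - z) := fun z => by
    rw [deriv_fun_add (by fun_prop) (by fun_prop), deriv_fun_add (by fun_prop) (by fun_prop),
      deriv_comp_sub_const, deriv_comp_add_const, deriv_comp_const_sub]
  simp only [h]
  rw [deriv_fun_add (by fun_prop) (by fun_prop), deriv_fun_add (by fun_prop) (by fun_prop),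
      deriv.fun_neg, deriv_comp_sub_const, deriv_comp_add_const, deriv_comp_const_sub, neg_neg]

theorem wave_equation_of_dAlembert {u : ℝ → ℝ → ℝ} (hA : ContDiff ℝ 2 A)
    (hB : ContDiff ℝ 2 B) (hC : ContDiff ℝ 2 C)
    (hu : ∀ t x, u t x = A (x - t) + B (x + t) + C (t - x)) (t x : ℝ) :
    deriv (fun s => deriv (fun s' => u s' x) s) t =
      deriv (fun z => deriv (fun z' => u t z') z) x := by
  simp only [hu, deriv_deriv_dAlembert_time hA hB hC, deriv_deriv_dAlembert_space hA hB hC]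

end dAlembert

section RobinCorrection

variable (κ : ℝ) (f : ℝ → ℝ)

/-- The paper's `κ θ(a) ∫₀^a e^{-κ(a-y)} f y dy` with `e^{-κa}` pulled out of the integral and
without `θ(a)`, which is invisible when `f = 0` on `(-∞, 0]`. -/
noncomputable def robinCorrection (a : ℝ) : ℝ :=
  κ * (exp (-κ * a) * ∫ y in (0:ℝ)..a, exp (κ * y) * f y)

variable {κ f}

lemma hasDerivAt_robinCorrection (hf : Continuous f) (a : ℝ) :
    HasDerivAt (robinCorrection κ f) (κ * f a - κ * robinCorrection κ f a) a := by
  have hc : Continuous fun y => exp (κ * y) * f y := by fun_prop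
  have hI : HasDerivAt (fun b => ∫ y in (0:ℝ)..b, exp (κ * y) * f y) (exp (κ * a) * f a) a :=
    intervalIntegral.integral_hasDerivAt_right (hc.intervalIntegrable _ _)
      (hc.stronglyMeasurableAtFilter _ _) hc.continuousAt
  have hE : HasDerivAt (fun b => exp (-κ * b)) (exp (-κ * a) * (-κ)) a := by
    simpa using ((hasDerivAt_id a).const_mul (-κ)).exp
  refine ((hE.mul hI).const_mul κ).congr_deriv ?_
  have hexp : exp (-κ * a) * exp (κ * a) = 1 := by rw [← exp_add]; simp
  simp only [robinCorrection]
  linear_combination (κ * f a) * hexp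

lemma deriv_robinCorrection (hf : Continuous f) :
    deriv (robinCorrection κ f) = fun a => κ * f a - κ * robinCorrection κ f a :=
  funext fun a => (hasDerivAt_robinCorrection hf a).deriv

lemma contDiff_robinCorrection (hf : ContDiff ℝ 1 f) : ContDiff ℝ 2 (robinCorrection κ f) := by
  have hG : Differentiable ℝ (robinCorrection κ f) := fun a =>
    (hasDerivAt_robinCorrection hf.continuous a).differentiableAt
  have hG₁ : ContDiff ℝ 1 (robinCorrection κ f) := by
    have := hG.continuous
    rw [contDiff_one_iff_deriv, deriv_robinCorrection hf.continuous]
    exact ⟨hG, by fun_prop⟩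
  refine (contDiff_succ_iff_deriv (n := 1)).2 ⟨hG, by simp, ?_⟩
  rw [deriv_robinCorrection hf.continuous]
  fun_prop

lemma mul_ite_integral_eq_robinCorrection (hzero : ∀ y ≤ (0:ℝ), f y = 0) (a : ℝ) :
    κ * (if 0 < a then ∫ y in (0:ℝ)..a, exp (-κ * (a - y)) * f y else 0) =
      robinCorrection κ f a := by
  rw [robinCorrection, ← intervalIntegral.integral_const_mul]
  split_ifs with ha
  · congr 1
    refine intervalIntegral.integral_congr fun y _ => ?_
    rw [← mul_assoc, ← exp_add]
    ring_nf
  · rw [intervalIntegral.integral_congr (g := fun _ => 0), intervalIntegral.integral_zero, mul_zero]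
    intro y hy
    have : y ≤ 0 := by
      rcases Set.mem_uIcc.mp hy with ⟨_, _⟩ | ⟨_, _⟩ <;> linarith
    simp [hzero y this]

end RobinCorrection

theorem robin_wave_solution_general (κ : ℝ) (f : ℝ → ℝ)
    (hf : ContDiff ℝ 2 f) (hzero : ∀ y ≤ (0:ℝ), f y = 0) :
    ∀ t x : ℝ, 0 < t → 0 < x → t ≠ x →
      (deriv (fun s => deriv (fun s' =>
          (f (x - s') + f (x + s') + f (s' - x)) / 2 -
            κ * (if 0 < s' - x then
              ∫ y in (0:ℝ)..(s' - x), Real.exp (-κ * (s' - x - y)) * f y else 0)) s) t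
        =
       deriv (fun z => deriv (fun z' =>
          (f (z' - t) + f (z' + t) + f (t - z')) / 2 -
            κ * (if 0 < t - z' then
              ∫ y in (0:ℝ)..(t - z'), Real.exp (-κ * (t - z' - y)) * f y else 0)) z) x) := by
  intro t x _ _ _
  simp only [mul_ite_integral_eq_robinCorrection hzero]
  have hf₂ : ContDiff ℝ 2 (fun y => f y / 2) := by fun_prop
  have hC : ContDiff ℝ 2 (fun y => f y / 2 - robinCorrection κ f y) :=
    hf₂.sub (contDiff_robinCorrection (hf.of_le (by norm_num)))
  exact wave_equation_of_dAlembert (u := fun s z => (f (z - s) + f (z + s) + f (s - z)) / 2 -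
    robinCorrection κ f (s - z)) hf₂ hf₂ hC (fun _ _ => by ring) t x

/-- The solution of the half-line wave problem with Robin boundary condition:
`u(t,x) = ½[f(x-t) + f(x+t) + f(t-x)] - κ θ(t-x) ∫_0^{t-x} e^{-κ(t-x-y)} f y dy`
satisfies the wave equation `u_tt = u_xx` on `{t > 0, x > 0, t ≠ x}`, for `f` of
class `C²` vanishing on `(-∞,0]`. -/
theorem robin_wave_solution (κ : ℝ) (hκ : 0 < κ) (f : ℝ → ℝ)
    (hf : ContDiff ℝ 2 f) (hzero : ∀ y ≤ (0:ℝ), f y = 0) :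
    ∀ t x : ℝ, 0 < t → 0 < x → t ≠ x →
      (deriv (fun s => deriv (fun s' =>
          (f (x - s') + f (x + s') + f (s' - x)) / 2 -
            κ * (if 0 < s' - x then
              ∫ y in (0:ℝ)..(s' - x), Real.exp (-κ * (s' - x - y)) * f y else 0)) s) t
        =
       deriv (fun z => deriv (fun z' =>
          (f (z' - t) + f (z' + t) + f (t - z')) / 2 -
            κ * (if 0 < t - z' then
              ∫ y in (0:ℝ)..(t - z'), Real.exp (-κ * (t - z' - y)) * f y else 0)) z) x) :=
  robin_wave_solution_general κ f hf hzero
end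

section
/- For κ > 0, t > 0, x ≥ 0, y ≥ 0, the Robin correction term of the heat kernel satisfies -2κ (4πt)^{-1/2} e^{κx} ∫_x^∞ e^{-κs} exp(-(s+y)²/(4t)) ds = -κ e^{κ(x+y)} e^{κ²t} erfc((x+y)/√(4t) + κ√t). -/
/-!
Completing the square, `κ s + (s + y)² / (4t) = ((s + y + 2κt) / (2√t))² - κ y - κ² t`, turns the
integrand into a constant times a Gaussian, and the affine substitution `u = (s + y + 2κt) / (2√t)`
maps `(x, ∞)` onto `((x + y) / √(4t) + κ√t, ∞)`, which is the erfc integral.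
-/

open MeasureTheory Real

noncomputable def erfc (z : ℝ) : ℝ :=
  (2 / Real.sqrt Real.pi) * ∫ u in Set.Ioi z, Real.exp (-u ^ 2)

section IoiChangeVariables

variable {E : Type*} [NormedAddCommGroup E] [NormedSpace ℝ E]

theorem integral_Ioi_comp_add_right (g : ℝ → E) (a c : ℝ) :
    ∫ s in Set.Ioi a, g (s + c) = ∫ s in Set.Ioi (a + c), g s := by
  have h := (measurePreserving_add_right volume c).setIntegral_preimage_emb
    (measurableEmbedding_addRight c) g (Set.Ioi (a + c))
  rwa [Set.preimage_add_const_Ioi, add_sub_cancel_right] at h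

theorem integral_Ioi_comp_add_div (g : ℝ → E) (a c : ℝ) {b : ℝ} (hb : 0 < b) :
    ∫ s in Set.Ioi a, g ((s + c) / b) = b • ∫ u in Set.Ioi ((a + c) / b), g u := by
  simp_rw [div_eq_inv_mul]
  rw [integral_Ioi_comp_add_right (fun s ↦ g (b⁻¹ * s)),
    integral_comp_mul_left_Ioi g _ (inv_pos.2 hb), inv_inv]

end IoiChangeVariables

theorem sqrt_four_mul {a : ℝ} : √(4 * a) = 2 * √a := by
  rw [sqrt_mul (by norm_num), show (4 : ℝ) = 2 ^ 2 by norm_num, sqrt_sq (by norm_num)]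

theorem exp_neg_mul_mul_exp_heat (κ y s : ℝ) {t : ℝ} (ht : 0 < t) :
    exp (-κ * s) * exp (-(s + y) ^ 2 / (4 * t))
      = exp (κ * y + κ ^ 2 * t) * exp (-((s + (y + 2 * κ * t)) / (2 * √t)) ^ 2) := by
  rw [← exp_add, ← exp_add, div_pow, mul_pow, sq_sqrt ht.le]
  congr 1
  field_simp
  ring

theorem integral_Ioi_exp_neg_mul_mul_exp_heat (κ x y : ℝ) {t : ℝ} (ht : 0 < t) :
    ∫ s in Set.Ioi x, exp (-κ * s) * exp (-(s + y) ^ 2 / (4 * t))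
      = √(π * t) * exp (κ * y + κ ^ 2 * t) * erfc ((x + y) / √(4 * t) + κ * √t) := by
  have hlower : (x + (y + 2 * κ * t)) / (2 * √t) = (x + y) / √(4 * t) + κ * √t := by
    rw [sqrt_four_mul]
    field_simp
    rw [sq_sqrt ht.le]
    ring
  simp_rw [exp_neg_mul_mul_exp_heat κ y _ ht]
  rw [integral_const_mul, integral_Ioi_comp_add_div (fun u ↦ exp (-u ^ 2)) _ _ (by positivity),
    hlower, erfc, smul_eq_mul, sqrt_mul pi_pos.le]
  field_simp

theorem robin_heat_correction_general (κ t x y : ℝ) (ht : 0 < t) :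
    -(2 * κ) * (Real.sqrt (4 * Real.pi * t))⁻¹ * Real.exp (κ * x) *
        ∫ s in Set.Ioi x, Real.exp (-κ * s) * Real.exp (-(s + y) ^ 2 / (4 * t))
      = -κ * Real.exp (κ * (x + y)) * Real.exp (κ ^ 2 * t) *
          erfc ((x + y) / Real.sqrt (4 * t) + κ * Real.sqrt t) := by
  rw [integral_Ioi_exp_neg_mul_mul_exp_heat κ x y ht, mul_assoc 4, sqrt_four_mul, mul_add,
    exp_add, exp_add]
  field_simp

/-- The Robin correction term of the heat kernel:
`-2κ (4πt)^{-1/2} e^{κx} ∫_x^∞ e^{-κs} e^{-(s+y)²/(4t)} ds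
  = -κ e^{κ(x+y)} e^{κ²t} erfc((x+y)/√(4t) + κ√t)`. -/
theorem robin_heat_correction (κ t x y : ℝ) (hκ : 0 < κ) (ht : 0 < t)
    (hx : 0 ≤ x) (hy : 0 ≤ y) :
    -(2 * κ) * (Real.sqrt (4 * Real.pi * t))⁻¹ * Real.exp (κ * x) *
        ∫ s in Set.Ioi x, Real.exp (-κ * s) * Real.exp (-(s + y) ^ 2 / (4 * t))
      = -κ * Real.exp (κ * (x + y)) * Real.exp (κ ^ 2 * t) *
          erfc ((x + y) / Real.sqrt (4 * t) + κ * Real.sqrt t) :=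
  robin_heat_correction_general κ t x y ht
end

section
/- For κ > 0 and t > 0, ∫_0^∞ [-κ e^{2κx} e^{κ²t} erfc(2x/√(4t) + κ√t)] dx = ½(e^{κ²t} erfc(κ√t) - 1). -/
/-!
With `a ≥ 0`, the function `H(y) = e^{2ay + a²} erfc(y + a) - erfc y` is an antiderivative of
`2a e^{2ay + a²} erfc(y + a)`: differentiating the erfc factors produces two Gaussians that cancel,
since `e^{2ay + a²} e^{-(y + a)²} = e^{-y²}`. Shifting the variable of integration in erfc gives
`e^{2ay + a²} erfc(y + a) ≤ erfc y ≤ e^{-y²}`, so `H` vanishes at infinity and the integrand is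
integrable; hence `∫_0^∞ 2a e^{2ay + a²} erfc(y + a) dy = -H(0) = 1 - e^{a²} erfc a`.
The substitution `x = √t y` reduces the theorem to this identity with `a = κ√t`.
-/

open MeasureTheory Real

open Set Filter Topology

theorem setIntegral_Ioi_comp_add_right {E : Type*} [NormedAddCommGroup E] [NormedSpace ℝ E]
    (f : ℝ → E) (a d : ℝ) : ∫ x in Ioi a, f (x + d) = ∫ x in Ioi (a + d), f x := by
  rw [← integral_indicator measurableSet_Ioi, ← integral_indicator measurableSet_Ioi,
    ← integral_add_right_eq_self (indicator (Ioi (a + d)) f) d]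
  congr 1
  ext x
  simp only [indicator, mem_Ioi, add_lt_add_iff_right]

theorem integrable_exp_neg_sq : Integrable fun u : ℝ => exp (-u ^ 2) := by
  simpa using integrable_exp_neg_mul_sq one_pos

theorem hasDerivAt_erfc (z : ℝ) : HasDerivAt erfc (-(2 / √π) * exp (-z ^ 2)) z := by
  have hc : Continuous fun u : ℝ => exp (-u ^ 2) := by fun_prop
  have hsplit : erfc = fun w => (2 / √π) *
      ((∫ u in Ioi 0, exp (-u ^ 2)) - ∫ u in (0 : ℝ)..w, exp (-u ^ 2)) := funext fun w => by
    rw [erfc, ← intervalIntegral.integral_Ioi_sub_Ioi' integrable_exp_neg_sq.integrableOn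
      integrable_exp_neg_sq.integrableOn, sub_sub_cancel]
  have hI : HasDerivAt (fun w => ∫ u in (0 : ℝ)..w, exp (-u ^ 2)) (exp (-z ^ 2)) z :=
    intervalIntegral.integral_hasDerivAt_right (hc.intervalIntegrable _ _)
      (hc.stronglyMeasurableAtFilter _ _) hc.continuousAt
  have := (hI.const_sub (∫ u in Ioi 0, exp (-u ^ 2))).const_mul (2 / √π)
  rw [hsplit]
  exact this.congr_deriv (by ring)

@[fun_prop]
theorem continuous_erfc : Continuous erfc :=
  continuous_iff_continuousAt.2 fun z => (hasDerivAt_erfc z).continuousAt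

theorem erfc_nonneg (z : ℝ) : 0 ≤ erfc z :=
  mul_nonneg (by positivity) (setIntegral_nonneg measurableSet_Ioi fun u _ => (exp_pos _).le)

theorem erfc_zero : erfc 0 = 1 := by
  have h := integral_gaussian_Ioi 1
  simp only [neg_mul, one_mul, div_one] at h
  rw [erfc, h]
  field_simp

theorem exp_mul_erfc_add_le_erfc {a : ℝ} (ha : 0 ≤ a) (y : ℝ) :
    exp (2 * a * y + a ^ 2) * erfc (y + a) ≤ erfc y := by
  have hint : Integrable fun v : ℝ => exp (-(v + a) ^ 2) :=
    integrable_exp_neg_sq.comp_add_right a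
  rw [erfc, erfc, ← setIntegral_Ioi_comp_add_right, mul_left_comm, ← integral_const_mul]
  refine mul_le_mul_of_nonneg_left (setIntegral_mono_on (hint.const_mul _).integrableOn
    integrable_exp_neg_sq.integrableOn measurableSet_Ioi fun v hv => ?_) (by positivity)
  -- the exponent on the left is `-v² - 2a(v - y)`
  rw [← exp_add, exp_le_exp]
  nlinarith [hv.out.le]

theorem erfc_le_exp_neg_sq {a : ℝ} (ha : 0 ≤ a) : erfc a ≤ exp (-a ^ 2) := by
  have h := exp_mul_erfc_add_le_erfc ha 0
  simp only [mul_zero, zero_add, erfc_zero] at h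
  rwa [exp_neg, ← one_div, le_div_iff₀' (exp_pos _)]

theorem tendsto_exp_neg_sq_atTop : Tendsto (fun y : ℝ => exp (-y ^ 2)) atTop (𝓝 0) :=
  tendsto_exp_atBot.comp (tendsto_neg_atTop_atBot.comp (tendsto_pow_atTop two_ne_zero))

theorem tendsto_erfc_atTop : Tendsto erfc atTop (𝓝 0) :=
  squeeze_zero' (.of_forall erfc_nonneg)
    ((eventually_ge_atTop 0).mono fun _ hy => erfc_le_exp_neg_sq hy) tendsto_exp_neg_sq_atTop

theorem hasDerivAt_exp_mul_erfc_add_sub_erfc (a y : ℝ) :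
    HasDerivAt (fun y => exp (2 * a * y + a ^ 2) * erfc (y + a) - erfc y)
      (2 * a * exp (2 * a * y + a ^ 2) * erfc (y + a)) y := by
  have hE : HasDerivAt (fun y => exp (2 * a * y + a ^ 2)) (exp (2 * a * y + a ^ 2) * (2 * a)) y :=
    (((hasDerivAt_id y).const_mul (2 * a)).add_const (a ^ 2)).exp.congr_deriv (by simp)
  have hF : HasDerivAt (fun y => erfc (y + a)) (-(2 / √π) * exp (-(y + a) ^ 2)) y :=
    (hasDerivAt_erfc (y + a)).comp_add_const y a
  have hcancel : exp (2 * a * y + a ^ 2) * exp (-(y + a) ^ 2) = exp (-y ^ 2) := by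
    rw [← exp_add]; ring_nf
  refine ((hE.mul hF).sub (hasDerivAt_erfc y)).congr_deriv ?_
  linear_combination (-(2 / √π)) * hcancel

theorem integrableOn_exp_mul_erfc_add {a : ℝ} (ha : 0 ≤ a) :
    IntegrableOn (fun y => exp (2 * a * y + a ^ 2) * erfc (y + a)) (Ioi 0) := by
  refine integrable_exp_neg_sq.integrableOn.mono' (by fun_prop : Continuous _).aestronglyMeasurable
    ((ae_restrict_mem measurableSet_Ioi).mono fun y (hy : 0 < y) => ?_)
  rw [norm_of_nonneg (mul_nonneg (exp_pos _).le (erfc_nonneg _))]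
  exact (exp_mul_erfc_add_le_erfc ha y).trans (erfc_le_exp_neg_sq hy.le)

theorem integral_Ioi_exp_mul_erfc_add {a : ℝ} (ha : 0 ≤ a) :
    ∫ y in Ioi 0, 2 * a * exp (2 * a * y + a ^ 2) * erfc (y + a) = 1 - exp (a ^ 2) * erfc a := by
  have hlim : Tendsto (fun y => exp (2 * a * y + a ^ 2) * erfc (y + a) - erfc y) atTop (𝓝 0) := by
    have h := squeeze_zero (fun y => mul_nonneg (exp_pos _).le (erfc_nonneg (y + a)))
      (exp_mul_erfc_add_le_erfc ha) tendsto_erfc_atTop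
    simpa using h.sub tendsto_erfc_atTop
  have hint : IntegrableOn (fun y : ℝ => 2 * a * exp (2 * a * y + a ^ 2) * erfc (y + a))
      (Ioi 0) := by
    simpa only [IntegrableOn, mul_assoc] using (integrableOn_exp_mul_erfc_add ha).const_mul (2 * a)
  rw [integral_Ioi_of_hasDerivAt_of_tendsto' (fun y _ => hasDerivAt_exp_mul_erfc_add_sub_erfc a y)
    hint hlim]
  simp [erfc_zero]

/-- The trace of the Robin correction to the heat kernel:
`∫_0^∞ [-κ e^{2κx} e^{κ²t} erfc(2x/√(4t) + κ√t)] dx = ½(e^{κ²t} erfc(κ√t) - 1)`. -/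
theorem robin_heat_trace (κ t : ℝ) (hκ : 0 < κ) (ht : 0 < t) :
    ∫ x in Set.Ioi (0:ℝ),
        (-κ * Real.exp (2 * κ * x) * Real.exp (κ ^ 2 * t) *
          erfc (2 * x / Real.sqrt (4 * t) + κ * Real.sqrt t))
      = (Real.exp (κ ^ 2 * t) * erfc (κ * Real.sqrt t) - 1) / 2 := by
  set s := √t
  have hs : 0 < s := sqrt_pos.2 ht
  have hst : s ^ 2 = t := sq_sqrt ht.le
  have h4t : √(4 * t) = 2 * s := by
    rw [show 4 * t = 2 ^ 2 * t by norm_num, sqrt_mul (by positivity), sqrt_sq zero_le_two]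
  set g := fun y => 2 * (κ * s) * exp (2 * (κ * s) * y + (κ * s) ^ 2) * erfc (y + κ * s)
  have hrescale : ∀ x, -κ * exp (2 * κ * x) * exp (κ ^ 2 * t) * erfc (2 * x / √(4 * t) + κ * s)
      = -(2 * s)⁻¹ * g (s⁻¹ * x) := fun x => by
    have harg : 2 * x / (2 * s) + κ * s = s⁻¹ * x + κ * s := by field_simp
    have hexp : exp (2 * κ * x) * exp (κ ^ 2 * t)
        = exp (2 * (κ * s) * (s⁻¹ * x) + (κ * s) ^ 2) := by
      rw [← exp_add, ← hst]; field_simp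
    rw [h4t, harg, mul_assoc (-κ), hexp]
    simp only [g]
    field_simp
  simp only [hrescale]
  rw [integral_const_mul, integral_comp_mul_left_Ioi g 0 (inv_pos.2 hs), mul_zero, smul_eq_mul,
    integral_Ioi_exp_mul_erfc_add (by positivity), inv_inv, mul_pow, hst]
  field_simp
  ring
end

section
/- For κ > 0, t > 0, x, y > 0, the identity -(2κ/π) t e^{κx} ∫_x^∞ e^{-κs}/((s+y)² + t²) ds = (2κ/π) e^{κ(x+y)} Im[e^{-iκt} Ei(iκt - κ(x+y))] holds, where Ei is the exponential integral. -/
open MeasureTheory Real Complex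

/-- The exponential integral `Ei(z) = ∫_{-∞}^z e^u/u du`, for `z` with negative
real part represented as `Ei(z) = -∫_1^∞ e^{zs}/s ds`. -/
noncomputable def Ei (z : ℂ) : ℂ :=
  -∫ s in Set.Ioi (1:ℝ), Complex.exp (z * s) / s

/-! For `Re z < 0`, differentiating under the integral gives `Ei' z = e^z / z`. Hence, for
`β = y - i t`, the function `u ↦ e^{κβ} Ei(-κ(u + β))` is an antiderivative of `e^{-κu} / (u + β)`
on `[x, ∞)` that vanishes at infinity, so `∫_x^∞ e^{-κs} / (s + β) ds = -e^{κβ} Ei(-κ(x + β))`.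
Taking imaginary parts, with `Im (1 / (s + y - i t)) = t / ((s + y)² + t²)`, gives the identity. -/

open Set Filter Topology

lemma norm_cexp_mul_div_le {z : ℂ} {s : ℝ} (hs : 1 ≤ s) :
    ‖cexp (z * s) / s‖ ≤ Real.exp (z.re * s) := by
  rw [norm_div, Complex.norm_exp, Complex.norm_real, Real.norm_of_nonneg (by linarith)]
  simpa using div_le_self (Real.exp_pos _).le hs

lemma integrableOn_cexp_mul_div_Ioi_one {z : ℂ} (hz : z.re < 0) :
    IntegrableOn (fun s : ℝ => cexp (z * s) / s) (Ioi 1) := by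
  refine (integrableOn_exp_mul_Ioi hz 1).mono' ?_ ?_
  · refine ContinuousOn.aestronglyMeasurable ?_ measurableSet_Ioi
    exact ContinuousOn.div (by fun_prop) (by fun_prop) fun s hs => by
      simpa using (zero_lt_one.trans hs).ne'
  · filter_upwards [ae_restrict_mem measurableSet_Ioi] with s hs
    exact norm_cexp_mul_div_le (le_of_lt hs)

lemma norm_Ei_le {z : ℂ} (hz : z.re < 0) : ‖Ei z‖ ≤ -Real.exp z.re / z.re := by
  rw [Ei, norm_neg]
  calc ‖∫ s in Ioi (1:ℝ), cexp (z * s) / s‖ ≤ ∫ s in Ioi (1:ℝ), Real.exp (z.re * s) :=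
        norm_integral_le_of_norm_le (integrableOn_exp_mul_Ioi hz 1) <| by
          filter_upwards [ae_restrict_mem measurableSet_Ioi] with s hs
          exact norm_cexp_mul_div_le (le_of_lt hs)
    _ = -Real.exp z.re / z.re := by simpa using integral_exp_mul_Ioi hz 1

lemma tendsto_Ei_comap_re_atBot : Tendsto Ei (comap re atBot) (𝓝 0) := by
  refine squeeze_zero_norm' ?_ (Real.tendsto_exp_atBot.comp tendsto_comap)
  filter_upwards [tendsto_comap.eventually (eventually_le_atBot (-1))] with z hz
  refine (norm_Ei_le (by linarith)).trans ?_
  rw [Function.comp_apply, div_le_iff_of_neg (by linarith)]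
  nlinarith [Real.exp_pos z.re]

theorem hasDerivAt_Ei {z : ℂ} (hz : z.re < 0) : HasDerivAt Ei (cexp z / z) z := by
  have hball : ∀ w ∈ Metric.ball z (-z.re / 2), w.re < z.re / 2 := fun w hw => by
    have := (abs_re_le_norm (w - z)).trans_lt (mem_ball_iff_norm.mp hw)
    rw [sub_re, abs_lt] at this
    linarith
  have hbound : ∀ᵐ (s : ℝ) ∂volume.restrict (Ioi (1:ℝ)), ∀ w ∈ Metric.ball z (-z.re / 2),
      ‖cexp (w * s)‖ ≤ Real.exp (z.re / 2 * s) := by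
    filter_upwards [ae_restrict_mem measurableSet_Ioi] with s hs w hw
    rw [Complex.norm_exp, Real.exp_le_exp, mul_re, ofReal_re, ofReal_im, mul_zero, sub_zero]
    exact mul_le_mul_of_nonneg_right (hball w hw).le (zero_le_one.trans (le_of_lt hs))
  have hdiff : ∀ᵐ (s : ℝ) ∂volume.restrict (Ioi (1:ℝ)), ∀ w ∈ Metric.ball z (-z.re / 2),
      HasDerivAt (fun w => cexp (w * s) / s) (cexp (w * s)) w := by
    filter_upwards [ae_restrict_mem measurableSet_Ioi] with s hs w hw
    have hs0 : (s : ℂ) ≠ 0 := by simpa using (zero_lt_one.trans hs).ne'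
    simpa [hs0] using ((hasDerivAt_id w).mul_const (s : ℂ)).cexp.div_const (s : ℂ)
  have hmeas : ∀ᶠ w in 𝓝 z, AEStronglyMeasurable (fun s : ℝ => cexp (w * s) / s)
      (volume.restrict (Ioi (1:ℝ))) :=
    Eventually.of_forall fun w => ContinuousOn.aestronglyMeasurable
      (ContinuousOn.div (by fun_prop) (by fun_prop) fun s hs => by
        simpa using (zero_lt_one.trans hs).ne') measurableSet_Ioi
  obtain ⟨-, h⟩ := hasDerivAt_integral_of_dominated_loc_of_deriv_le
    (Metric.ball_mem_nhds z (by linarith : 0 < -z.re / 2)) hmeas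
    (integrableOn_cexp_mul_div_Ioi_one hz) (F' := fun w (s : ℝ) => cexp (w * s)) (by fun_prop)
    hbound (integrableOn_exp_mul_Ioi (by linarith) 1) hdiff
  rw [integral_exp_mul_complex_Ioi hz 1] at h
  have h' := h.neg
  rw [ofReal_one, mul_one, neg_div, neg_neg] at h'
  exact h'

section ExpDivIntegral

variable {κ : ℝ} {β : ℂ} {x : ℝ}

lemma integrableOn_exp_div_ofReal_add (hκ : 0 < κ) (hx : 0 < x + β.re) :
    IntegrableOn (fun s : ℝ => (Real.exp (-κ * s) : ℂ) / (s + β)) (Ioi x) := by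
  have hden : ∀ s ∈ Ioi x, x + β.re ≤ ‖(s : ℂ) + β‖ := fun s hs => by
    have := re_le_norm ((s : ℂ) + β)
    simp only [add_re, ofReal_re] at this
    linarith [mem_Ioi.mp hs]
  refine ((integrableOn_exp_mul_Ioi (neg_lt_zero.mpr hκ) x).div_const (x + β.re)).mono' ?_ ?_
  · refine ContinuousOn.aestronglyMeasurable ?_ measurableSet_Ioi
    exact ContinuousOn.div (by fun_prop) (by fun_prop) fun s hs =>
      norm_pos_iff.mp (hx.trans_le (hden s hs))
  · filter_upwards [ae_restrict_mem measurableSet_Ioi] with s hs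
    rw [norm_div, norm_real, Real.norm_of_nonneg (Real.exp_pos _).le]
    exact div_le_div_of_nonneg_left (Real.exp_pos _).le hx (hden s hs)

theorem integral_exp_div_ofReal_add (hκ : 0 < κ) (hx : 0 < x + β.re) :
    ∫ s in Ioi x, (Real.exp (-κ * s) : ℂ) / (s + β) = -cexp (κ * β) * Ei (-κ * (x + β)) := by
  have hderiv : ∀ u ∈ Ici x, HasDerivAt (fun u : ℝ => cexp (κ * β) * Ei (-κ * (u + β)))
      ((Real.exp (-κ * u) : ℂ) / (u + β)) u := fun u hu => by
    have hu : 0 < u + β.re := hx.trans_le (by linarith [mem_Ici.mp hu])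
    have hu0 : (u : ℂ) + β ≠ 0 := fun h => by
      have := congrArg re h
      simp only [add_re, ofReal_re, zero_re] at this
      linarith
    have hκ0 : (κ : ℂ) ≠ 0 := ofReal_ne_zero.mpr hκ.ne'
    have hEi := hasDerivAt_Ei (z := -κ * (u + β)) (by simpa using mul_pos hκ hu)
    have := ((hEi.comp (u : ℂ) (((hasDerivAt_id _).add_const β).const_mul (-κ : ℂ))).const_mul
      (cexp (κ * β))).comp_ofReal
    refine this.congr_deriv ?_
    rw [ofReal_exp, ofReal_mul, ofReal_neg]
    field_simp
    rw [← Complex.exp_add]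
    ring_nf
  have htendsto : Tendsto (fun u : ℝ => cexp (κ * β) * Ei (-κ * (u + β))) atTop (𝓝 0) := by
    have : Tendsto (fun u : ℝ => -κ * ((u : ℂ) + β)) atTop (comap re atBot) := by
      refine tendsto_comap_iff.mpr ?_
      convert (tendsto_atTop_add_const_right atTop β.re tendsto_id).const_mul_atTop_of_neg
        (neg_lt_zero.mpr hκ) using 1
      funext u
      simp
    simpa using (tendsto_Ei_comap_re_atBot.comp this).const_mul (cexp (κ * β))
  rw [integral_Ioi_of_hasDerivAt_of_tendsto' hderiv (integrableOn_exp_div_ofReal_add hκ hx)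
    htendsto, zero_sub, neg_mul, neg_mul]

end ExpDivIntegral

lemma im_ofReal_div_ofReal_add_ofReal_sub_mul_I (c s y t : ℝ) :
    ((c : ℂ) / (s + (y - t * I))).im = t * (c / ((s + y) ^ 2 + t ^ 2)) := by
  rw [div_im, normSq_apply]
  simp only [ofReal_im, add_re, ofReal_re, sub_re, mul_re, I_re, mul_zero, I_im, mul_one, sub_self,
    sub_zero, zero_mul, add_im, sub_im, mul_im, add_zero, zero_sub, zero_add, mul_neg, neg_mul,
    neg_neg, zero_div]
  ring

theorem robin_cylinder_correction_general (κ t x y : ℝ)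
    (hκ : 0 < κ) (hx : 0 < x) (hy : 0 < y) :
    -(2 * κ / Real.pi) * t * Real.exp (κ * x) *
        ∫ s in Set.Ioi x, Real.exp (-κ * s) / ((s + y) ^ 2 + t ^ 2)
      = (2 * κ / Real.pi) * Real.exp (κ * (x + y)) *
          (Complex.exp (-(κ * t : ℝ) * Complex.I) *
            Ei ((κ * t : ℝ) * Complex.I - (κ * (x + y) : ℝ))).im := by
  have hxβ : 0 < x + ((y : ℂ) - t * I).re := by simpa using add_pos hx hy
  have key := congrArg im (integral_exp_div_ofReal_add hκ hxβ)
  rw [← RCLike.im_to_complex, ← integral_im (integrableOn_exp_div_ofReal_add hκ hxβ)] at key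
  simp only [RCLike.im_to_complex, im_ofReal_div_ofReal_add_ofReal_sub_mul_I,
    integral_const_mul] at key
  have hEi : -(κ : ℂ) * (x + (y - t * I)) = (κ * t : ℝ) * I - (κ * (x + y) : ℝ) := by
    push_cast; ring
  have hexp : cexp (κ * (y - t * I)) = Real.exp (κ * y) * cexp (-(κ * t : ℝ) * I) := by
    rw [ofReal_exp, ← Complex.exp_add]; push_cast; ring_nf
  rw [hEi, hexp, neg_mul, neg_im, mul_assoc, im_ofReal_mul] at key
  rw [show Real.exp (κ * (x + y)) = Real.exp (κ * x) * Real.exp (κ * y) by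
    rw [mul_add, Real.exp_add]]
  linear_combination (-(2 * κ / Real.pi) * Real.exp (κ * x)) * key

/-- The Robin correction to the cylinder (Poisson) kernel:
`-(2κ/π) t e^{κx} ∫_x^∞ e^{-κs}/((s+y)² + t²) ds
  = (2κ/π) e^{κ(x+y)} Im[e^{-iκt} Ei(iκt - κ(x+y))]`. -/
theorem robin_cylinder_correction (κ t x y : ℝ)
    (hκ : 0 < κ) (ht : 0 < t) (hx : 0 < x) (hy : 0 < y) :
    -(2 * κ / Real.pi) * t * Real.exp (κ * x) *
        ∫ s in Set.Ioi x, Real.exp (-κ * s) / ((s + y) ^ 2 + t ^ 2)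
      = (2 * κ / Real.pi) * Real.exp (κ * (x + y)) *
          (Complex.exp (-(κ * t : ℝ) * Complex.I) *
            Ei ((κ * t : ℝ) * Complex.I - (κ * (x + y) : ℝ))).im :=
  robin_cylinder_correction_general κ t x y hκ hx hy
end

section
/- For every n ≥ 1 and every x ≥ 0, the generalized Laguerre polynomial satisfies |L¹_{n-1}(x)| e^{-x/2} ≤ n, where L¹_{n-1}(x) = Σ_{j=1}^n C(n,j) (-x)^{j-1}/(j-1)!. -/
/-!
Put `u(x) = x e^{-x/2} L¹_{n-1}(x)`. The Laguerre equation `x y'' + (2 - x) y' + (n - 1) y = 0`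
turns into `u'' + q u = 0` with `q(x) = n/x - 1/4`. As `q` decreases, so does the energy
`u'² + q u²`, whose value at `0` is `n²`. On `[0, 4n]`, where `q ≥ 0`, this gives `|u'| ≤ n`, hence
`|u(x)| ≤ n x`. Beyond `4n` we have `u u'' ≥ 0`, so `u²` is convex there, and since it tends to `0`
it decreases: `|u(x)| ≤ |u(4n)| ≤ 4n² ≤ n x`.
-/

open Finset Polynomial Filter Topology Real
open scoped Nat

theorem Nat.cast_choose_succ_mul {R : Type*} [CommRing R] (n k : ℕ) :
    (n.choose (k + 1) : R) * (k + 1) = n.choose k * (n - k) := by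
  rcases le_or_gt k n with hkn | hnk
  · have h := congrArg (Nat.cast (R := R)) (Nat.choose_succ_right_eq n k)
    push_cast [Nat.cast_sub hkn] at h
    exact h
  · simp [Nat.choose_eq_zero_of_lt hnk, Nat.choose_eq_zero_of_lt (Nat.lt_succ_of_lt hnk)]

/-- `laguerreOne n` is `L¹_{n-1}`. -/
noncomputable def laguerreOne (n : ℕ) : ℝ[X] :=
  ∑ k ∈ range n, C ((-1 : ℝ) ^ k * n.choose (k + 1) / k !) * X ^ k

theorem coeff_laguerreOne (n k : ℕ) :
    (laguerreOne n).coeff k = (-1 : ℝ) ^ k * n.choose (k + 1) / k ! := by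
  rw [laguerreOne, finsetSum_coeff]
  simp only [coeff_C_mul_X_pow, sum_ite_eq, mem_range]
  split_ifs with hk
  · rfl
  · simp [Nat.choose_eq_zero_of_lt (by omega : n < k + 1)]

theorem laguerreOne_eval_zero (n : ℕ) : (laguerreOne n).eval 0 = n := by
  simp [← coeff_zero_eq_eval_zero, coeff_laguerreOne]

theorem coeff_laguerreOne_succ (n k : ℕ) :
    ((k : ℝ) + 1) * (k + 2) * (laguerreOne n).coeff (k + 1)
      = ((k : ℝ) + 1 - n) * (laguerreOne n).coeff k := by
  have h := Nat.cast_choose_succ_mul (R := ℝ) n (k + 1)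
  simp only [coeff_laguerreOne, Nat.factorial_succ]
  push_cast at h ⊢
  field_simp
  linear_combination -(-1 : ℝ) ^ k * h

theorem laguerreOne_ode (n : ℕ) :
    X * derivative (derivative (laguerreOne n)) + (2 - X) * derivative (laguerreOne n)
      + C ((n : ℝ) - 1) * laguerreOne n = 0 := by
  ext k
  simp only [coeff_add, sub_mul, coeff_sub, coeff_C_mul, coeff_ofNat_mul, coeff_derivative,
    coeff_zero]
  rcases k with _ | k
  · simp only [coeff_X_mul_zero]
    linear_combination coeff_laguerreOne_succ n 0
  · simp only [coeff_X_mul, coeff_derivative]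
    have h := coeff_laguerreOne_succ n (k + 1)
    push_cast at h ⊢
    linear_combination h

theorem laguerreOne_eval (n : ℕ) (x : ℝ) :
    (laguerreOne n).eval x
      = ∑ j ∈ Icc 1 n, (n.choose j : ℝ) * (-x) ^ (j - 1) / (j - 1)! := by
  rw [laguerreOne, eval_finsetSum, ← Ico_add_one_right_eq_Icc, sum_Ico_eq_sum_range]
  refine sum_congr rfl fun k _ => ?_
  rw [Nat.add_sub_cancel_left, add_comm 1 k]
  simp only [eval_mul, eval_C, eval_pow, eval_X, neg_pow x]
  ring

theorem ConvexOn.antitoneOn_of_isBoundedUnder {f : ℝ → ℝ} {a : ℝ} (hf : ConvexOn ℝ (Set.Ici a) f)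
    (hbdd : IsBoundedUnder (· ≤ ·) atTop f) : AntitoneOn f (Set.Ici a) := by
  intro x hx y hy hxy
  by_contra! hlt
  have hxy' : x < y := hxy.lt_of_ne (by rintro rfl; exact lt_irrefl _ hlt)
  set s := (f y - f x) / (y - x)
  have hs : 0 < s := div_pos (sub_pos.2 hlt) (sub_pos.2 hxy')
  have hgrowth : ∀ z, y < z → f y + s * (z - y) ≤ f z := fun z hz => by
    have hslope := hf.slope_mono_adjacent hx (le_trans hy.out hz.le : a ≤ z) hxy' hz
    rw [le_div_iff₀ (sub_pos.2 hz)] at hslope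
    linarith
  refine not_isBoundedUnder_of_tendsto_atTop ?_ hbdd
  refine tendsto_atTop_mono' atTop ((eventually_gt_atTop y).mono hgrowth) ?_
  have hlin := (tendsto_atTop_add_const_right atTop (-y) tendsto_id).const_mul_atTop hs
  simpa only [id, ← sub_eq_add_neg] using tendsto_atTop_add_const_left atTop (f y) hlin

theorem convexOn_sq_of_mul_deriv2_nonneg {D : Set ℝ} (hD : Convex ℝ D) {v v' v'' : ℝ → ℝ}
    (hv : ∀ x, HasDerivAt v (v' x) x) (hv' : ∀ x, HasDerivAt v' (v'' x) x)
    (hvv'' : ∀ x ∈ interior D, 0 ≤ v x * v'' x) : ConvexOn ℝ D (fun x => v x ^ 2) := by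
  refine convexOn_of_hasDerivWithinAt2_nonneg (f' := fun x => 2 * v x * v' x)
    (f'' := fun x => 2 * (v' x ^ 2 + v x * v'' x)) hD
    (fun x _ => ((hv x).pow 2).continuousAt.continuousWithinAt)
    (fun x _ => ((hv x).pow 2).hasDerivWithinAt.congr_deriv (by ring))
    (fun x _ => (((hv x).const_mul 2).mul (hv' x)).hasDerivWithinAt.congr_deriv (by ring))
    (fun x hx => ?_)
  have := hvv'' x hx
  positivity

theorem hasDerivAt_exp_neg_half (x : ℝ) :
    HasDerivAt (fun y => exp (-y / 2)) (-exp (-x / 2) / 2) x :=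
  ((hasDerivAt_neg x).div_const 2).exp.congr_deriv (by ring)

section LaguerreFun

variable (n : ℕ)

noncomputable def laguerreFun (x : ℝ) : ℝ := x * exp (-x / 2) * (laguerreOne n).eval x

noncomputable def laguerreFunDeriv (x : ℝ) : ℝ :=
  exp (-x / 2) * ((laguerreOne n).eval x
    + x * ((derivative (laguerreOne n)).eval x - (laguerreOne n).eval x / 2))

/-- The energy `u'² + q u²` of `u = laguerreFun n`, with `q u²` written without division. -/
noncomputable def laguerreEnergy (x : ℝ) : ℝ :=
  laguerreFunDeriv n x ^ 2 + (n - x / 4) * x * (exp (-x / 2) * (laguerreOne n).eval x) ^ 2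

theorem hasDerivAt_laguerreFun (x : ℝ) : HasDerivAt (laguerreFun n) (laguerreFunDeriv n x) x := by
  have h : HasDerivAt (laguerreFun n) _ x :=
    ((hasDerivAt_id x).mul (hasDerivAt_exp_neg_half x)).mul ((laguerreOne n).hasDerivAt x)
  refine h.congr_deriv ?_
  simp only [laguerreFunDeriv, Pi.mul_apply, id]
  ring

theorem hasDerivAt_laguerreFunDeriv (x : ℝ) :
    HasDerivAt (laguerreFunDeriv n) ((x / 4 - n) * exp (-x / 2) * (laguerreOne n).eval x) x := by
  set P := laguerreOne n
  have hode := congrArg (eval x) (laguerreOne_ode n)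
  simp only [eval_add, eval_mul, eval_sub, eval_X, eval_C, eval_ofNat, eval_zero] at hode
  have hP := P.hasDerivAt x
  have h : HasDerivAt (laguerreFunDeriv n) _ x := (hasDerivAt_exp_neg_half x).mul
    (hP.add ((hasDerivAt_id x).mul (((derivative P).hasDerivAt x).sub (hP.div_const 2))))
  refine h.congr_deriv ?_
  simp only [id]
  linear_combination exp (-x / 2) * hode

theorem hasDerivAt_laguerreEnergy (x : ℝ) :
    HasDerivAt (laguerreEnergy n) (-n * (exp (-x / 2) * (laguerreOne n).eval x) ^ 2) x := by
  have hc : HasDerivAt (fun y : ℝ => (n - y / 4) * y) ((0 - 1 / 4) * x + (n - x / 4) * 1) x :=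
    ((hasDerivAt_const x (n : ℝ)).sub ((hasDerivAt_id x).div_const 4)).mul (hasDerivAt_id x)
  have hg := (hasDerivAt_exp_neg_half x).mul ((laguerreOne n).hasDerivAt x)
  refine (((hasDerivAt_laguerreFunDeriv n x).pow 2).add (hc.mul (hg.pow 2))).congr_deriv ?_
  simp only [laguerreFunDeriv, Pi.pow_apply, Pi.mul_apply]
  ring

theorem laguerreEnergy_le {x : ℝ} (hx : 0 ≤ x) : laguerreEnergy n x ≤ n ^ 2 := by
  have hanti : AntitoneOn (laguerreEnergy n) (Set.Ici 0) :=
    antitoneOn_of_hasDerivWithinAt_nonpos (convex_Ici 0)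
      (fun y _ => (hasDerivAt_laguerreEnergy n y).continuousAt.continuousWithinAt)
      (fun y _ => (hasDerivAt_laguerreEnergy n y).hasDerivWithinAt)
      (fun y _ => mul_nonpos_of_nonpos_of_nonneg (neg_nonpos.2 n.cast_nonneg) (sq_nonneg _))
  calc laguerreEnergy n x ≤ laguerreEnergy n 0 := hanti Set.self_mem_Ici hx hx
    _ = n ^ 2 := by simp [laguerreEnergy, laguerreFunDeriv, laguerreOne_eval_zero]

theorem abs_laguerreFunDeriv_le {x : ℝ} (hx : 0 ≤ x) (hx4 : x ≤ 4 * n) :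
    |laguerreFunDeriv n x| ≤ n := by
  have hE := laguerreEnergy_le n hx
  have hrest : 0 ≤ (n - x / 4) * x * (exp (-x / 2) * (laguerreOne n).eval x) ^ 2 := by
    have : 0 ≤ (n : ℝ) - x / 4 := by linarith
    positivity
  exact abs_le_of_sq_le_sq (by unfold laguerreEnergy at hE; linarith) (Nat.cast_nonneg n)

theorem abs_laguerreFun_le_of_le {x : ℝ} (hx : 0 ≤ x) (hx4 : x ≤ 4 * n) :
    |laguerreFun n x| ≤ n * x := by
  have h := norm_image_sub_le_of_norm_deriv_le_segment' (C := n)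
    (fun y _ => (hasDerivAt_laguerreFun n y).hasDerivWithinAt)
    (fun y hy => abs_laguerreFunDeriv_le n hy.1 hy.2.le) x ⟨hx, hx4⟩
  simpa [laguerreFun] using h

theorem tendsto_laguerreFun_sq : Tendsto (fun x => laguerreFun n x ^ 2) atTop (𝓝 0) := by
  refine (tendsto_div_exp_atTop ((X * laguerreOne n) ^ 2)).congr fun x => ?_
  have hexp : (exp x)⁻¹ = exp (-x / 2) * exp (-x / 2) := by rw [← exp_add, add_halves, exp_neg]
  simp only [laguerreFun, div_eq_mul_inv, hexp, eval_pow, eval_mul, eval_X]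
  ring

theorem antitoneOn_laguerreFun_sq : AntitoneOn (fun x => laguerreFun n x ^ 2) (Set.Ici (4 * n)) := by
  refine ConvexOn.antitoneOn_of_isBoundedUnder ?_ (tendsto_laguerreFun_sq n).isBoundedUnder_le
  refine convexOn_sq_of_mul_deriv2_nonneg (convex_Ici _) (hasDerivAt_laguerreFun n)
    (hasDerivAt_laguerreFunDeriv n) fun x hx => ?_
  rw [interior_Ici] at hx
  have h4 : 0 ≤ x / 4 - n := by linarith [hx.out]
  have h0 : 0 ≤ x := by linarith [hx.out, (Nat.cast_nonneg n : (0 : ℝ) ≤ n)]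
  calc 0 ≤ x * (x / 4 - n) * (exp (-x / 2) * (laguerreOne n).eval x) ^ 2 := by positivity
    _ = _ := by rw [laguerreFun]; ring

theorem abs_laguerreFun_le {x : ℝ} (hx : 0 ≤ x) : |laguerreFun n x| ≤ n * x := by
  rcases le_or_gt x (4 * n) with hx4 | hx4
  · exact abs_laguerreFun_le_of_le n hx hx4
  have h4n : (0 : ℝ) ≤ 4 * n := by positivity
  calc |laguerreFun n x| ≤ |laguerreFun n (4 * n)| :=
        sq_le_sq.1 (antitoneOn_laguerreFun_sq n Set.self_mem_Ici hx4.le hx4.le)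
    _ ≤ n * (4 * n) := abs_laguerreFun_le_of_le n h4n le_rfl
    _ ≤ n * x := by gcongr

end LaguerreFun

theorem laguerre_bound_general (n : ℕ) (x : ℝ) (hx : 0 ≤ x) :
    |∑ j ∈ Finset.Icc 1 n, (n.choose j : ℝ) * (-x) ^ (j - 1) / (Nat.factorial (j - 1))| *
        Real.exp (-x / 2) ≤ n := by
  rw [← laguerreOne_eval]
  rcases hx.eq_or_lt with rfl | hpos
  · simp [laguerreOne_eval_zero]
  have h := abs_laguerreFun_le n hx
  rw [laguerreFun, abs_mul, abs_mul, abs_of_pos hpos, abs_of_pos (exp_pos _), mul_assoc,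
    mul_comm (n : ℝ)] at h
  rw [mul_comm]
  exact le_of_mul_le_mul_left h hpos

/-- Bound on the associated Laguerre polynomial with parameter 1:
`|L¹_{n-1}(x)| e^{-x/2} ≤ n` for `x ≥ 0`, where
`L¹_{n-1}(x) = Σ_{j=1}^n C(n,j) (-x)^{j-1}/(j-1)!`. -/
theorem laguerre_bound (n : ℕ) (hn : 1 ≤ n) (x : ℝ) (hx : 0 ≤ x) :
    |∑ j ∈ Finset.Icc 1 n, (n.choose j : ℝ) * (-x) ^ (j - 1) / (Nat.factorial (j - 1))| *
        Real.exp (-x / 2) ≤ n :=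
  laguerre_bound_general n x hx
end
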